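/- Joint diagonalization forces a signed permutation. Let Λ₁,…,Λ_K be diagonal real p×p matrices such that for every pair of indices i ≠ j there exists k ∈ {1,…,K} with (Λ_k)ᵢᵢ ≠ (Λ_k)ⱼⱼ. If V is an orthogonal p×p matrix such that V Λ_k Vᵀ is diagonal for every k = 1,…,K, then V is a signed permutation matrix. -/

import Mathlib

open Matrix

/-- A signed permutation matrix: exactly one nonzero entry in each row and each
column, each such entry being `1` or `-1`. -/
def IsSignedPerm {p : ℕ} (Q : Matrix (Fin p) (Fin p) ℝ) : Prop :=
  (∀ i, ∃! j, Q i j ≠ 0) ∧ (∀ j, ∃! i, Q i j ≠ 0) ∧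
  (∀ i j, Q i j ≠ 0 → Q i j = 1 ∨ Q i j = -1)

/-- A generalized permutation matrix: exactly one nonzero entry in each row and
each column. -/
def IsGenPerm {p : ℕ} (Q : Matrix (Fin p) (Fin p) ℝ) : Prop :=
  (∀ i, ∃! j, Q i j ≠ 0) ∧ (∀ j, ∃! i, Q i j ≠ 0)

open scoped ComplexOrder in
/-- The square root of a positive semidefinite matrix, as `Matrix.PosSemidef.sqrt` was defined
in the older Mathlib (removed since). -/
noncomputable def Matrix.PosSemidef.sqrt {n 𝕜 : Type*} [Fintype n] [DecidableEq n] [RCLike 𝕜]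
    {A : Matrix n n 𝕜} (hA : A.PosSemidef) : Matrix n n 𝕜 :=
  hA.1.eigenvectorUnitary.1 * diagonal ((↑) ∘ (√·) ∘ hA.1.eigenvalues) *
    (star hA.1.eigenvectorUnitary : Matrix n n 𝕜)

open scoped Classical in
/-- For a symmetric positive (semi)definite matrix `M`, `invSqrt M` is the inverse
of its unique positive semidefinite square root, i.e. `M^{-1/2}`. -/
noncomputable def invSqrt {p : ℕ} (M : Matrix (Fin p) (Fin p) ℝ) : Matrix (Fin p) (Fin p) ℝ :=
  if h : M.PosSemidef then h.sqrt⁻¹ else 0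

/-- Joint diagonalization forces a signed permutation. -/
theorem joint_diag_signedPerm {p K : ℕ}
    (Λ : Fin K → Matrix (Fin p) (Fin p) ℝ)
    (V : Matrix (Fin p) (Fin p) ℝ)
    (hΛ : ∀ k, (Λ k).IsDiag)
    (hsep : ∀ i j : Fin p, i ≠ j → ∃ k, Λ k i i ≠ Λ k j j)
    (hV : V * Vᵀ = 1)
    (hdiag : ∀ k, (V * Λ k * Vᵀ).IsDiag) :
    IsSignedPerm V := by
  classical
  have hVtV : Vᵀ * V = 1 := mul_eq_one_comm.mp hV
  -- key eigenvalue relation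
  have key : ∀ (k : Fin K) (i j : Fin p), V i j ≠ 0 →
      Λ k j j = (V * Λ k * Vᵀ) i i := by
    intro k i j hij
    have h1 : V * Λ k = (V * Λ k * Vᵀ) * V := by
      rw [Matrix.mul_assoc (V * Λ k), hVtV, Matrix.mul_one]
    have h2 : (V * Λ k) i j = ((V * Λ k * Vᵀ) * V) i j := congrFun (congrFun h1 i) j
    rw [Matrix.mul_apply, Matrix.mul_apply] at h2
    have hl : ∑ l, V i l * Λ k l j = V i j * Λ k j j := by
      refine Finset.sum_eq_single j (fun l _ hlj => ?_) (by simp)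
      rw [hΛ k hlj, mul_zero]
    have hr : ∑ l, (V * Λ k * Vᵀ) i l * V l j = (V * Λ k * Vᵀ) i i * V i j := by
      refine Finset.sum_eq_single i (fun l _ hli => ?_) (by simp)
      rw [hdiag k (Ne.symm hli), zero_mul]
    rw [hl, hr] at h2
    have h3 : Λ k j j * V i j = (V * Λ k * Vᵀ) i i * V i j := by
      rw [mul_comm (Λ k j j)]; exact h2
    exact mul_right_cancel₀ hij h3
  -- row sums of squares equal 1
  have hrow : ∀ i : Fin p, ∑ j, V i j * V i j = 1 := by
    intro i
    have := congrFun (congrFun hV i) i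
    rw [Matrix.mul_apply] at this
    simpa [Matrix.transpose_apply, Matrix.one_apply] using this
  -- each row has a nonzero entry
  have hex : ∀ i : Fin p, ∃ j, V i j ≠ 0 := by
    intro i
    by_contra h
    push_neg at h
    have := hrow i
    simp [h] at this
  -- at most one nonzero entry per row
  have huniq : ∀ (i j j' : Fin p), V i j ≠ 0 → V i j' ≠ 0 → j = j' := by
    intro i j j' hj hj'
    by_contra hne
    obtain ⟨k, hk⟩ := hsep j j' hne
    exact hk ((key k i j hj).trans (key k i j' hj').symm)
  -- the row map
  choose f hf using hex
  have hfother : ∀ i j, j ≠ f i → V i j = 0 := by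
    intro i j hj
    by_contra h
    exact hj (huniq i j (f i) h (hf i))
  have hfinj : Function.Injective f := by
    intro i i' hii
    by_contra hne
    have h0 : (V * Vᵀ) i i' = 0 := by
      rw [hV, Matrix.one_apply_ne hne]
    rw [Matrix.mul_apply] at h0
    have : ∑ j, V i j * Vᵀ j i' = V i (f i) * V i' (f i) := by
      refine Finset.sum_eq_single (f i) (fun j _ hj => ?_) (by simp)
      rw [Matrix.transpose_apply, hfother i j hj, zero_mul]
    rw [this] at h0
    rcases mul_eq_zero.mp h0 with h | h
    · exact hf i h
    · rw [hii] at h; exact hf i' h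
  have hfsurj : Function.Surjective f := Finite.surjective_of_injective hfinj
  refine ⟨fun i => ⟨f i, hf i, fun j hj => huniq i j (f i) hj (hf i)⟩, fun j => ?_, fun i j hij => ?_⟩
  · obtain ⟨i, rfl⟩ := hfsurj j
    refine ⟨i, hf i, fun i' hi' => ?_⟩
    have h4 : f i = f i' := huniq i' (f i) (f i') hi' (hf i')
    exact hfinj h4.symm
  · have hj : j = f i := huniq i j (f i) hij (hf i)
    have hs : ∑ l, V i l * V i l = V i j * V i j := by
      refine Finset.sum_eq_single j (fun l _ hl => ?_) (by simp)
      rw [hfother i l (hj ▸ hl), zero_mul]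
    rw [hrow i] at hs
    exact mul_self_eq_one_iff.mp hs.symm
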